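/- Let D be a weighted oriented graph such that the edge ideal I(D) is componentwise linear. Then none of the following four weighted oriented graphs can occur as an induced weighted oriented subgraph of D: (D_1) the oriented path with edges (x_1,x_2),(x_2,x_3) and w(x_2) > 1, w(x_3) > 1; (D_2) the graph with edges (x_2,x_1),(x_2,x_3) and w(x_1) > 1, w(x_3) > 1; (D_3) the oriented 3-cycle with edges (x_1,x_2),(x_2,x_3),(x_3,x_1) and w(x_i) > 1 for all i; (D_4) the triangle with edges (x_1,x_2),(x_1,x_3),(x_3,x_2) and w(x_2) > 1, w(x_3) > 1. -/

import Mathlib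

open MvPolynomial Module

noncomputable section

/-- The polynomial ring `K[x_1, ..., x_n]`. -/
abbrev PolyR (K : Type) [Field K] (n : ℕ) : Type := MvPolynomial (Fin n) K

variable (K : Type) [Field K] (n : ℕ)

/-- The Koszul differential on `K(x_1,...,x_n) ⊗ R`, where homological degree `i`
elements are encoded as functions on `Finset (Fin n)` supported on sets of card `i`. -/
def kDiff : (Finset (Fin n) → PolyR K n) →ₗ[K] (Finset (Fin n) → PolyR K n) where
  toFun f T := ∑ k ∈ Tᶜ,
      ((-1 : ℤ) ^ (((insert k T).filter (fun j => j < k)).card)) • (X k * f (insert k T))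
  map_add' f g := by
    funext T
    simp [mul_add, smul_add, Finset.sum_add_distrib]
  map_smul' c f := by
    funext T
    simp [Finset.smul_sum, mul_smul_comm, smul_comm c]

/-- The internal-degree-`j`, homological-degree-`i` component of the Koszul complex
of the ideal `I`: functions supported on subsets of cardinality `i`, whose values lie
in `I` and are homogeneous of degree `j - i`. -/
def kosC (I : Ideal (PolyR K n)) (i j : ℕ) : Submodule K (Finset (Fin n) → PolyR K n) :=
  if i ≤ j then
    ⨅ S : Finset (Fin n),
      Submodule.comap (LinearMap.proj S)
        (if S.card = i then
            (Submodule.restrictScalars K I ⊓ homogeneousSubmodule (Fin n) K (j - i))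
          else ⊥)
  else ⊥

/-- The graded Betti number `β_{i,j}(I) = dim_K Tor_i(I, K)_j`, computed as the dimension of
the `(i,j)`-th graded piece of the homology of the Koszul complex `K(x_1,...,x_n) ⊗ I`. -/
def bettiNum (I : Ideal (PolyR K n)) (i j : ℕ) : ℕ :=
  finrank K ↥(kosC K n I i j ⊓ LinearMap.ker (kDiff K n))
    - finrank K ↥(Submodule.map (kDiff K n) (kosC K n I (i + 1) j)
        ⊓ (kosC K n I i j ⊓ LinearMap.ker (kDiff K n)))

/-- The Castelnuovo–Mumford regularity of a homogeneous ideal `I ⊆ K[x_1,...,x_n]`: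
`reg I = max { j - i | β_{i,j}(I) ≠ 0 }`. -/
def CMreg (I : Ideal (PolyR K n)) : ℕ :=
  sSup {d : ℕ | ∃ i j : ℕ, bettiNum K n I i j ≠ 0 ∧ d = j - i}

/-- `I_⟨d⟩`: the ideal generated by the degree-`d` homogeneous component of `I`. -/
def idealComponent (I : Ideal (PolyR K n)) (d : ℕ) : Ideal (PolyR K n) :=
  Ideal.span ((I : Set (PolyR K n)) ∩ {f | f.IsHomogeneous d})

/-- An ideal is componentwise linear if for every `d ≥ 0` the ideal `I_⟨d⟩` is zero or
has a `d`-linear resolution (equivalently, `reg (I_⟨d⟩) = d`). -/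
def ComponentwiseLinear (I : Ideal (PolyR K n)) : Prop :=
  ∀ d : ℕ, idealComponent K n I d = ⊥ ∨ CMreg K n (idealComponent K n I d) = d

/-- A monomial ideal is an ideal generated by monomials. -/
def IsMonomialIdeal (I : Ideal (PolyR K n)) : Prop :=
  ∃ A : Set (Fin n →₀ ℕ), I = Ideal.span ((fun a => monomial a (1 : K)) '' A)

/-- The set `G(I)` of (exponent vectors of) the minimal monomial generators of `I`:
monomials in `I` which are not divisible by any other monomial of `I`. -/
def minMonomialGens (I : Ideal (PolyR K n)) : Set (Fin n →₀ ℕ) :=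
  {a | (monomial a (1 : K)) ∈ I ∧
    ∀ b : Fin n →₀ ℕ, b ≤ a → b ≠ a → (monomial b (1 : K)) ∉ I}

/-- Vertex splittable monomial ideals (Moradi–Khosh-Ahang):
`I = (v)`, `I = 0`, `I = R`, or `I = x I₁ + I₂` where `I₁, I₂` are vertex splittable ideals in
`K[X ∖ {x}]`, `I₂ ⊆ I₁`, and `G(I)` is the disjoint union of `G(xI₁)` and `G(I₂)`. -/
inductive VertexSplittable : Ideal (PolyR K n) → Prop
  | principal (a : Fin n →₀ ℕ) : VertexSplittable (Ideal.span {(monomial a (1 : K) : PolyR K n)})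
  | bot : VertexSplittable ⊥
  | top : VertexSplittable ⊤
  | split (x : Fin n) (I₁ I₂ : Ideal (PolyR K n)) :
      VertexSplittable I₁ → VertexSplittable I₂ →
      (∀ a ∈ minMonomialGens K n I₁, a x = 0) →
      (∀ a ∈ minMonomialGens K n I₂, a x = 0) →
      I₂ ≤ I₁ →
      minMonomialGens K n (Ideal.span {(X x : PolyR K n)} * I₁ + I₂) =
        ((fun a => a + Finsupp.single x 1) '' minMonomialGens K n I₁) ∪
          minMonomialGens K n I₂ →
      Disjoint ((fun a => a + Finsupp.single x 1) '' minMonomialGens K n I₁)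
        (minMonomialGens K n I₂) →
      VertexSplittable (Ideal.span {(X x : PolyR K n)} * I₁ + I₂)

/-- A monomial ideal has linear quotients if its minimal monomial generators can be
ordered `u_1, ..., u_m` so that each colon ideal `((u_1,...,u_{i-1}) : u_i)` is generated by
a subset of the variables. -/
def HasLinearQuotients (I : Ideal (PolyR K n)) : Prop :=
  ∃ (m : ℕ) (u : Fin m → (Fin n →₀ ℕ)),
    Function.Injective u ∧
    minMonomialGens K n I = Set.range u ∧
    ∀ i : Fin m, 0 < (i : ℕ) →
      ∃ S : Set (Fin n),
        Submodule.colon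
            (Ideal.span ((fun j : Fin m => (monomial (u j) (1 : K) : PolyR K n)) ''
              {j : Fin m | (j : ℕ) < (i : ℕ)}))
            (Ideal.span {(monomial (u i) (1 : K) : PolyR K n)}) =
          Ideal.span ((fun v => (X v : PolyR K n)) '' S)

/-- A weighted oriented graph on the vertex set `{x_1, ..., x_n}`: a set of directed edges
(ordered pairs of distinct vertices) together with a weight function `w : V → ℤ_{≥1}`. -/
structure WOGraph (n : ℕ) where
  E : Set (Fin n × Fin n)
  w : Fin n → ℕ
  loopless : ∀ v, (v, v) ∉ E
  one_le_w : ∀ v, 1 ≤ w v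

/-- The edge ideal `I(D) = (x y^{w(y)} : (x,y) ∈ E(D))` of a weighted oriented graph. -/
def edgeIdeal (D : WOGraph n) : Ideal (PolyR K n) :=
  Ideal.span {m : PolyR K n | ∃ e ∈ D.E, m = X e.1 * X e.2 ^ D.w e.2}

/-- The underlying simple graph of a weighted oriented graph. -/
def underlying (D : WOGraph n) : SimpleGraph (Fin n) where
  Adj x y := x ≠ y ∧ ((x, y) ∈ D.E ∨ (y, x) ∈ D.E)
  symm := ⟨fun x y h => ⟨h.1.symm, h.2.symm⟩⟩
  loopless := ⟨fun x h => h.1 rfl⟩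

/-- The simple graph `H(I(D)_⟨2⟩)`, whose edges are the pairs `{x,y}` with `xy ∈ I(D)`,
so that `I(H) = I(D)_⟨2⟩`. -/
def Hgraph (D : WOGraph n) : SimpleGraph (Fin n) where
  Adj x y := x ≠ y ∧ (X x * X y : PolyR K n) ∈ edgeIdeal K n D
  symm := ⟨fun x y h => ⟨h.1.symm, by rw [mul_comm]; exact h.2⟩⟩
  loopless := ⟨fun x h => h.1 rfl⟩

/-- `f : Fin k → V` is an induced cycle of length `k` in `G`: `f` is injective and the
adjacencies among its image are exactly the consecutive (cyclic) ones. -/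
def IsInducedCycle {V : Type} (G : SimpleGraph V) (k : ℕ) (f : Fin k → V) : Prop :=
  Function.Injective f ∧
    ∀ a b : Fin k, G.Adj (f a) (f b) ↔
      (((a : ℕ) + 1) % k = (b : ℕ) ∨ ((b : ℕ) + 1) % k = (a : ℕ))

/-- A simple graph is chordal if it has no induced cycle of length `≥ 4`. -/
def Chordal {V : Type} (G : SimpleGraph V) : Prop :=
  ∀ k : ℕ, 4 ≤ k → ∀ f : Fin k → V, ¬ IsInducedCycle G k f

/-- A vertex cover of `G`: a set of vertices meeting every edge. -/
def IsVertexCover {V : Type} (G : SimpleGraph V) (C : Set V) : Prop :=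
  ∀ ⦃x y : V⦄, G.Adj x y → x ∈ C ∨ y ∈ C

/-- A minimal vertex cover: a vertex cover minimal with respect to inclusion. -/
def IsMinimalVertexCover {V : Type} (G : SimpleGraph V) (C : Set V) : Prop :=
  IsVertexCover G C ∧ ∀ C' ⊆ C, IsVertexCover G C' → C' = C

end

/-!
Each of `D₁, D₃, D₄` contains a directed path `x → y → z` with `w(y), w(z) > 1` (for `D₄` it is
`a → c → b`), and `D₂` is an out-star `x ← y → z` with `w(x), w(z) > 1`. Let `g₁, g₂` be the
generators of `I(D)` of the two edges, `m = lcm(g₁, g₂)` and `d = max(deg g₁, deg g₂)`; because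
the weights exceed `1`, `deg m > d + 1`. For the heads `p ≠ q` of the two edges, `m / x_p` and
`m / x_q` lie in `I(D)_⟨d⟩`, so `e_p ⊗ m / x_p - e_q ⊗ m / x_q` is a Koszul cycle of internal
degree `deg m`. It is not a boundary, since no generator of `I(D)` divides `m / (x_p x_k)` for
`k ≠ p`: the induced subgraph has no further edge whose generator could. Hence
`β_{1, deg m}(I(D)_⟨d⟩) ≠ 0` and `reg I(D)_⟨d⟩ ≥ deg m - 1 > d`.
-/

variable {K : Type} [Field K] {n : ℕ}

lemma mem_kosC_iff {I : Ideal (PolyR K n)} {i j : ℕ} (hij : i ≤ j)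
    {f : Finset (Fin n) → PolyR K n} :
    f ∈ kosC K n I i j ↔ ∀ S : Finset (Fin n), f S ∈
      if S.card = i then Submodule.restrictScalars K I ⊓ homogeneousSubmodule (Fin n) K (j - i)
      else ⊥ := by
  simp [kosC, if_pos hij, Submodule.mem_iInf]

lemma kosC_le_pi (I : Ideal (PolyR K n)) (i j : ℕ) :
    kosC K n I i j ≤ Submodule.pi Set.univ fun _ => restrictTotalDegree (Fin n) K j := by
  intro f hf S _
  change f S ∈ restrictTotalDegree (Fin n) K j
  by_cases hij : i ≤ j
  · have hfS := (mem_kosC_iff hij).1 hf S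
    split_ifs at hfS with hS
    · rw [mem_restrictTotalDegree]
      exact ((mem_homogeneousSubmodule _ _).1 hfS.2).totalDegree_le.trans (Nat.sub_le j i)
    · rw [(Submodule.mem_bot K).1 hfS]
      exact zero_mem _
  · rw [kosC, if_neg hij, Submodule.mem_bot] at hf
    rw [hf]
    exact zero_mem _

instance (I : Ideal (PolyR K n)) (i j : ℕ) : FiniteDimensional K (kosC K n I i j) :=
  have : FiniteDimensional K (Submodule.pi Set.univ fun _ : Finset (Fin n) =>
      restrictTotalDegree (Fin n) K j) :=
    Module.Finite.iff_fg.2 (Submodule.fg_pi fun _ => Module.Finite.iff_fg.1 inferInstance)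
  Submodule.finiteDimensional_of_le (kosC_le_pi I i j)

lemma apply_mem_of_mem_kosC {I : Ideal (PolyR K n)} {i j : ℕ} {f : Finset (Fin n) → PolyR K n}
    (hf : f ∈ kosC K n I i j) {S : Finset (Fin n)} (hS : S.card = i) : f S ∈ I := by
  by_cases hij : i ≤ j
  · have hfS := (mem_kosC_iff hij).1 hf S
    rw [if_pos hS] at hfS
    exact hfS.1
  · rw [kosC, if_neg hij, Submodule.mem_bot] at hf
    rw [hf]
    exact zero_mem I

lemma single_mem_kosC {I : Ideal (PolyR K n)} {i j : ℕ} (hij : i ≤ j) {S : Finset (Fin n)}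
    (hS : S.card = i) {f : PolyR K n} (hfI : f ∈ I) (hf : f.IsHomogeneous (j - i)) :
    Pi.single S f ∈ kosC K n I i j := by
  rw [mem_kosC_iff hij]
  intro T
  by_cases hT : T = S
  · subst hT
    simpa [hS] using ⟨hfI, hf⟩
  · rw [Pi.single_eq_of_ne hT]
    exact zero_mem _

lemma kDiff_single_singleton (p : Fin n) (f : PolyR K n) :
    kDiff K n (Pi.single {p} f) = Pi.single ∅ (X p * f) := by
  funext T
  simp only [kDiff, LinearMap.coe_mk, AddHom.coe_mk]
  by_cases hT : T = ∅
  · subst hT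
    rw [Finset.sum_eq_single p]
    · simp [Finset.filter_singleton]
    · intro k _ hk
      simp [hk]
    · simp
  · rw [Pi.single_eq_of_ne hT]
    refine Finset.sum_eq_zero fun k hk => ?_
    have hcard : 2 ≤ (insert k T).card := by
      rw [Finset.card_insert_of_notMem (Finset.mem_compl.1 hk)]
      have := Finset.card_pos.2 (Finset.nonempty_iff_ne_empty.2 hT)
      omega
    have hne : insert k T ≠ {p} := fun h => by simp [h] at hcard
    simp [Pi.single_eq_of_ne hne]

lemma bettiNum_ne_zero_of_cycle {I : Ideal (PolyR K n)} {i j : ℕ} {z : Finset (Fin n) → PolyR K n}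
    (hz : z ∈ kosC K n I i j) (hzk : kDiff K n z = 0)
    (φ : (Finset (Fin n) → PolyR K n) →ₗ[K] K) (hφz : φ z ≠ 0)
    (hφ : ∀ g ∈ kosC K n I (i + 1) j, φ (kDiff K n g) = 0) :
    bettiNum K n I i j ≠ 0 := by
  set Z := kosC K n I i j ⊓ LinearMap.ker (kDiff K n)
  have hlt : Submodule.map (kDiff K n) (kosC K n I (i + 1) j) ⊓ Z < Z := by
    refine lt_of_le_of_ne inf_le_right fun hEq => ?_
    have hzB : z ∈ Submodule.map (kDiff K n) (kosC K n I (i + 1) j) ⊓ Z := by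
      rw [hEq]
      exact ⟨hz, LinearMap.mem_ker.2 hzk⟩
    obtain ⟨g, hg, rfl⟩ := hzB.1
    exact hφz (hφ g hg)
  have : FiniteDimensional K Z := Submodule.finiteDimensional_of_le inf_le_left
  have := Submodule.finrank_lt_finrank_of_lt hlt
  change finrank K Z - finrank K ↥(Submodule.map (kDiff K n) (kosC K n I (i + 1) j) ⊓ Z) ≠ 0
  omega

lemma X_mul_monomial_one {σ R : Type*} [CommSemiring R] (p : σ) (μ : σ →₀ ℕ) :
    (X p * monomial μ 1 : MvPolynomial σ R) = monomial (Finsupp.single p 1 + μ) 1 := by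
  rw [monomial_single_add, pow_one]

/-- The witness is the Koszul cycle `e_p ⊗ x^μ - e_q ⊗ x^ν`; by `hI`, the coefficient of `x^μ` in
its `e_p`-component vanishes on every boundary. -/
lemma bettiNum_one_ne_zero {I : Ideal (PolyR K n)} {p q : Fin n} (hpq : p ≠ q)
    {μ ν : Fin n →₀ ℕ} (hμν : Finsupp.single p 1 + μ = Finsupp.single q 1 + ν)
    (hμ : monomial μ (1 : K) ∈ I) (hν : monomial ν (1 : K) ∈ I)
    (hI : ∀ k ≠ p, ∀ f ∈ I, coeff μ (X k * f) = 0) :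
    bettiNum K n I 1 (μ.degree + 1) ≠ 0 := by
  have hνμ : ν.degree = μ.degree := by simpa using congrArg Finsupp.degree hμν.symm
  have hpq' : ({p} : Finset (Fin n)) ≠ {q} := by simpa using hpq
  let z : Finset (Fin n) → PolyR K n := Pi.single ({p} : Finset (Fin n)) (monomial μ (1 : K)) -
    Pi.single ({q} : Finset (Fin n)) (monomial ν (1 : K))
  refine bettiNum_ne_zero_of_cycle (z := z) ?_ ?_ ((lcoeff K μ).comp (LinearMap.proj {p})) ?_ ?_
  · refine sub_mem (single_mem_kosC (by omega) (Finset.card_singleton p) hμ ?_)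
      (single_mem_kosC (by omega) (Finset.card_singleton q) hν ?_) <;>
    exact isHomogeneous_monomial _ (by omega)
  · rw [map_sub, kDiff_single_singleton, kDiff_single_singleton, X_mul_monomial_one,
      X_mul_monomial_one, hμν, sub_self]
  · simp [z, Pi.single_eq_of_ne hpq']
  · intro g hg
    simp only [kDiff, LinearMap.coe_comp, Function.comp_apply, LinearMap.coe_mk, AddHom.coe_mk,
      LinearMap.proj_apply, lcoeff_apply, coeff_sum, coeff_smul]
    refine Finset.sum_eq_zero fun k hk => ?_
    have hkp : k ≠ p := by simpa using hk
    have hcard : (insert k {p} : Finset (Fin n)).card = 1 + 1 := by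
      rw [Finset.card_insert_of_notMem (by simpa using hkp), Finset.card_singleton]
    rw [hI k hkp _ (apply_mem_of_mem_kosC hg hcard), smul_zero]

/-- `CMreg` is an `sSup` in `ℕ`, which is `0` for an unbounded set: `hreg` rules that out. -/
lemma sub_le_CMreg {I : Ideal (PolyR K n)} {i j : ℕ} (hb : bettiNum K n I i j ≠ 0)
    (hreg : CMreg K n I ≠ 0) : j - i ≤ CMreg K n I := by
  unfold CMreg at hreg ⊢
  by_cases hbdd : BddAbove {d : ℕ | ∃ i j : ℕ, bettiNum K n I i j ≠ 0 ∧ d = j - i}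
  · exact le_csSup hbdd ⟨i, j, hb, rfl⟩
  · simp [csSup_of_not_bddAbove hbdd] at hreg

lemma idealComponent_le (I : Ideal (PolyR K n)) (d : ℕ) : idealComponent K n I d ≤ I :=
  Ideal.span_le.2 Set.inter_subset_left

lemma monomial_mem_idealComponent {I : Ideal (PolyR K n)} {d : ℕ} {g μ : Fin n →₀ ℕ}
    (hg : monomial g (1 : K) ∈ I) (hgμ : g ≤ μ) (hgd : g.degree ≤ d) (hdμ : d ≤ μ.degree) :
    monomial μ (1 : K) ∈ idealComponent K n I d := by
  have hμ : μ - g + g = μ := tsub_add_cancel_of_le hgμ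
  have hdeg : (μ - g).degree + g.degree = μ.degree := by
    simpa using congrArg Finsupp.degree hμ
  obtain ⟨δ, hδ, hδd⟩ := Finsupp.exists_le_degree_eq (μ - g) (d - g.degree) (by omega)
  have hβ : monomial (δ + g) (1 : K) ∈ idealComponent K n I d := by
    refine Ideal.subset_span ⟨?_, isHomogeneous_monomial _ (by simp [hδd]; omega)⟩
    rw [← one_mul (1 : K), ← monomial_mul]
    exact I.mul_mem_left _ hg
  have hsplit : μ = (μ - g - δ) + (δ + g) := by
    rw [← add_assoc, tsub_add_cancel_of_le hδ, hμ]
  rw [hsplit, ← one_mul (1 : K), ← monomial_mul]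
  exact Ideal.mul_mem_left _ _ hβ

noncomputable def edgeExponent (D : WOGraph n) (e : Fin n × Fin n) : Fin n →₀ ℕ :=
  Finsupp.single e.1 1 + Finsupp.single e.2 (D.w e.2)

lemma degree_edgeExponent (D : WOGraph n) (e : Fin n × Fin n) :
    (edgeExponent D e).degree = 1 + D.w e.2 := by
  simp [edgeExponent]

lemma X_mul_X_pow_eq_monomial (D : WOGraph n) (e : Fin n × Fin n) :
    (X e.1 * X e.2 ^ D.w e.2 : PolyR K n) = monomial (edgeExponent D e) 1 := by
  rw [edgeExponent, ← X_mul_monomial_one, X_pow_eq_monomial]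

lemma edgeIdeal_eq_span_monomial (D : WOGraph n) :
    edgeIdeal K n D = Ideal.span ((fun s => monomial s (1 : K)) '' (edgeExponent D '' D.E)) := by
  rw [edgeIdeal, Set.image_image]
  congr 1
  ext f
  simp only [Set.mem_ofPred_eq, Set.mem_image, X_mul_X_pow_eq_monomial, eq_comm]

lemma monomial_mem_edgeIdeal {D : WOGraph n} {e : Fin n × Fin n} (he : e ∈ D.E)
    {γ : Fin n →₀ ℕ} (h : edgeExponent D e ≤ γ) : monomial γ (1 : K) ∈ edgeIdeal K n D := by
  rw [edgeIdeal_eq_span_monomial, mem_ideal_span_monomial_image]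
  intro γ' hγ'
  rw [Finset.mem_singleton.1 (support_monomial_subset hγ')]
  exact ⟨_, ⟨e, he, rfl⟩, h⟩

lemma coeff_X_mul_eq_zero_of_mem_edgeIdeal {D : WOGraph n} {f : PolyR K n}
    (hf : f ∈ edgeIdeal K n D) {k : Fin n} {μ : Fin n →₀ ℕ}
    (hμ : ∀ e ∈ D.E, ¬ edgeExponent D e + Finsupp.single k 1 ≤ μ) : coeff μ (X k * f) = 0 := by
  rw [coeff_X_mul']
  split_ifs with hk
  · by_contra hc
    rw [edgeIdeal_eq_span_monomial, mem_ideal_span_monomial_image] at hf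
    obtain ⟨_, ⟨e, he, rfl⟩, hle⟩ := hf _ (mem_support_iff.2 hc)
    refine hμ e he ?_
    rw [← tsub_add_cancel_of_le (Finsupp.single_le_iff.2 (Nat.one_le_iff_ne_zero.2
      (Finsupp.mem_support_iff.1 hk)))]
    exact add_le_add_left hle _
  · rfl

/-- For `d` the larger degree of the generators of `e₁, e₂`, both `x^μ` and `x^ν` lie in
`I(D)_⟨d⟩`, and their Koszul syzygy gives `β_{1, |μ|+1}(I(D)_⟨d⟩) ≠ 0`, so
`reg I(D)_⟨d⟩ ≥ |μ| > d`. -/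
theorem not_componentwiseLinear_edgeIdeal (D : WOGraph n) {p q : Fin n} (hpq : p ≠ q)
    {μ ν : Fin n →₀ ℕ} (hμν : Finsupp.single p 1 + μ = Finsupp.single q 1 + ν)
    {e₁ e₂ : Fin n × Fin n} (he₁ : e₁ ∈ D.E) (he₂ : e₂ ∈ D.E)
    (h₁ : edgeExponent D e₁ ≤ μ) (h₂ : edgeExponent D e₂ ≤ ν)
    (hdeg : max (edgeExponent D e₁).degree (edgeExponent D e₂).degree < μ.degree)
    (hμ : ∀ k ≠ p, ∀ e ∈ D.E, ¬ edgeExponent D e + Finsupp.single k 1 ≤ μ) :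
    ¬ ComponentwiseLinear K n (edgeIdeal K n D) := by
  intro hcl
  set d := max (edgeExponent D e₁).degree (edgeExponent D e₂).degree
  have hνμ : ν.degree = μ.degree := by simpa using congrArg Finsupp.degree hμν.symm
  have hμI : monomial μ (1 : K) ∈ idealComponent K n (edgeIdeal K n D) d :=
    monomial_mem_idealComponent (monomial_mem_edgeIdeal he₁ le_rfl) h₁ (le_max_left _ _)
      hdeg.le
  have hνI : monomial ν (1 : K) ∈ idealComponent K n (edgeIdeal K n D) d :=
    monomial_mem_idealComponent (monomial_mem_edgeIdeal he₂ le_rfl) h₂ (le_max_right _ _)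
      (hνμ ▸ hdeg.le)
  have hreg : CMreg K n (idealComponent K n (edgeIdeal K n D) d) = d := by
    refine (hcl d).resolve_left fun hbot => ?_
    rw [hbot, Ideal.mem_bot, monomial_eq_zero] at hμI
    exact one_ne_zero hμI
  have hd : d ≠ 0 := by
    have := degree_edgeExponent D e₁
    omega
  have hb := bettiNum_one_ne_zero hpq hμν hμI hνI fun k hk f hf =>
    coeff_X_mul_eq_zero_of_mem_edgeIdeal (idealComponent_le _ d hf) (hμ k hk)
  have := sub_le_CMreg hb (by rwa [hreg])
  omega

lemma eq_or_eq_or_eq_of_le_of_ne_zero {ι : Type*} {x y z v : ι} {a b c : ℕ} {f : ι →₀ ℕ}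
    (h : f ≤ Finsupp.single x a + Finsupp.single y b + Finsupp.single z c) (hv : f v ≠ 0) :
    v = x ∨ v = y ∨ v = z := by
  by_contra! hne
  have := Finsupp.le_def.1 h v
  simp [Ne.symm hne.1, Ne.symm hne.2.1, Ne.symm hne.2.2] at this
  exact hv this

lemma mem_three_of_edgeExponent_add_single_le {D : WOGraph n} {x y z u v k : Fin n}
    {a b c : ℕ} (h : edgeExponent D (u, v) + Finsupp.single k 1 ≤
      Finsupp.single x a + Finsupp.single y b + Finsupp.single z c) :
    (u = x ∨ u = y ∨ u = z) ∧ (v = x ∨ v = y ∨ v = z) ∧ (k = x ∨ k = y ∨ k = z) := by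
  refine ⟨eq_or_eq_or_eq_of_le_of_ne_zero h ?_, eq_or_eq_or_eq_of_le_of_ne_zero h ?_,
    eq_or_eq_or_eq_of_le_of_ne_zero h ?_⟩
  · simp [edgeExponent]
  · have := D.one_le_w v
    simp [edgeExponent]
    omega
  · simp

/-- `x_z x^μ = x_y x^ν = x y^{w(y)} z^{w(z)}` is the lcm of the generators of the two edges. -/
lemma not_componentwiseLinear_of_path (D : WOGraph n) {x y z : Fin n}
    (hxy : x ≠ y) (hyz : y ≠ z) (hxz : x ≠ z)
    (hE₁ : (x, y) ∈ D.E) (hE₂ : (y, z) ∈ D.E) (hzy : (z, y) ∉ D.E)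
    (hwyx : (y, x) ∈ D.E → 2 ≤ D.w x) (hwzx : (z, x) ∈ D.E → 2 ≤ D.w x)
    (hy : 2 ≤ D.w y) (hz : 2 ≤ D.w z) :
    ¬ ComponentwiseLinear K n (edgeIdeal K n D) := by
  refine not_componentwiseLinear_edgeIdeal D hyz.symm
    (μ := Finsupp.single x 1 + Finsupp.single y (D.w y) + Finsupp.single z (D.w z - 1))
    (ν := Finsupp.single x 1 + Finsupp.single y (D.w y - 1) + Finsupp.single z (D.w z))
    ?_ hE₁ hE₂ ?_ ?_ ?_ ?_
  · ext v
    simp only [Finsupp.coe_add, Pi.add_apply, Finsupp.single_apply]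
    grind
  · intro v
    simp only [edgeExponent, Finsupp.coe_add, Pi.add_apply, Finsupp.single_apply]
    grind
  · intro v
    simp only [edgeExponent, Finsupp.coe_add, Pi.add_apply, Finsupp.single_apply]
    grind
  · simp only [degree_edgeExponent, map_add, Finsupp.degree_single]
    omega
  · rintro k hk ⟨u, v⟩ he h
    obtain ⟨hu, hv, hk'⟩ := mem_three_of_edgeExponent_add_single_le h
    have hx := Finsupp.le_def.1 h x
    have hy := Finsupp.le_def.1 h y
    have hz := Finsupp.le_def.1 h z
    simp only [edgeExponent, Finsupp.coe_add, Pi.add_apply, Finsupp.single_apply] at hx hy hz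
    have := D.loopless u
    grind

/-- `x_z x^μ = x_x x^ν = x^{w(x)} y z^{w(z)}` is the lcm of the generators of the two edges. -/
lemma not_componentwiseLinear_of_outStar (D : WOGraph n) {x y z : Fin n}
    (hxy : x ≠ y) (hyz : y ≠ z) (hxz : x ≠ z)
    (hE₁ : (y, x) ∈ D.E) (hE₂ : (y, z) ∈ D.E) (hzx : (z, x) ∉ D.E)
    (hwxy : (x, y) ∈ D.E → 2 ≤ D.w y) (hwzy : (z, y) ∈ D.E → 2 ≤ D.w y)
    (hx : 2 ≤ D.w x) (hz : 2 ≤ D.w z) :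
    ¬ ComponentwiseLinear K n (edgeIdeal K n D) := by
  refine not_componentwiseLinear_edgeIdeal D hxz.symm
    (μ := Finsupp.single x (D.w x) + Finsupp.single y 1 + Finsupp.single z (D.w z - 1))
    (ν := Finsupp.single x (D.w x - 1) + Finsupp.single y 1 + Finsupp.single z (D.w z))
    ?_ hE₁ hE₂ ?_ ?_ ?_ ?_
  · ext v
    simp only [Finsupp.coe_add, Pi.add_apply, Finsupp.single_apply]
    grind
  · intro v
    simp only [edgeExponent, Finsupp.coe_add, Pi.add_apply, Finsupp.single_apply]
    grind
  · intro v
    simp only [edgeExponent, Finsupp.coe_add, Pi.add_apply, Finsupp.single_apply]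
    grind
  · simp only [degree_edgeExponent, map_add, Finsupp.degree_single]
    omega
  · rintro k hk ⟨u, v⟩ he h
    obtain ⟨hu, hv, hk'⟩ := mem_three_of_edgeExponent_add_single_le h
    have hx := Finsupp.le_def.1 h x
    have hy := Finsupp.le_def.1 h y
    have hz := Finsupp.le_def.1 h z
    simp only [edgeExponent, Finsupp.coe_add, Pi.add_apply, Finsupp.single_apply] at hx hy hz
    have := D.loopless u
    grind

lemma mem_edges_iff_of_induced {D : WOGraph n} {S : Set (Fin n)} {L : Set (Fin n × Fin n)}
    (hS : {e ∈ D.E | e.1 ∈ S ∧ e.2 ∈ S} = L) {u v : Fin n} (hu : u ∈ S) (hv : v ∈ S) :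
    (u, v) ∈ D.E ↔ (u, v) ∈ L := by
  rw [← hS]
  simp [hu, hv]

/-- If `I(D)` is componentwise linear, then none of the four weighted oriented
graphs `D₁, D₂, D₃, D₄` of Figure 1 occurs as an induced weighted oriented subgraph of `D`
(on any three distinct vertices `a, b, c`). -/
theorem stmt6 {K : Type} [Field K] {n : ℕ} (D : WOGraph n)
    (hcl : ComponentwiseLinear K n (edgeIdeal K n D))
    (a b c : Fin n) (hab : a ≠ b) (hbc : b ≠ c) (hac : a ≠ c) :
    ¬ (({e ∈ D.E | e.1 ∈ ({a, b, c} : Set (Fin n)) ∧ e.2 ∈ ({a, b, c} : Set (Fin n))} =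
          {(a, b), (b, c)} ∧ 1 < D.w b ∧ 1 < D.w c) ∨
       ({e ∈ D.E | e.1 ∈ ({a, b, c} : Set (Fin n)) ∧ e.2 ∈ ({a, b, c} : Set (Fin n))} =
          {(b, a), (b, c)} ∧ 1 < D.w a ∧ 1 < D.w c) ∨
       ({e ∈ D.E | e.1 ∈ ({a, b, c} : Set (Fin n)) ∧ e.2 ∈ ({a, b, c} : Set (Fin n))} =
          {(a, b), (b, c), (c, a)} ∧ 1 < D.w a ∧ 1 < D.w b ∧ 1 < D.w c) ∨
       ({e ∈ D.E | e.1 ∈ ({a, b, c} : Set (Fin n)) ∧ e.2 ∈ ({a, b, c} : Set (Fin n))} =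
          {(a, b), (a, c), (c, b)} ∧ 1 < D.w b ∧ 1 < D.w c)) := by
  rintro (⟨hE, hwb, hwc⟩ | ⟨hE, hwa, hwc⟩ | ⟨hE, hwa, hwb, hwc⟩ | ⟨hE, hwb, hwc⟩)
  · refine not_componentwiseLinear_of_path D hab hbc hac ?_ ?_ ?_ ?_ ?_ hwb hwc hcl <;>
      simp [mem_edges_iff_of_induced hE, hab, hbc, hac, hab.symm, hbc.symm, hac.symm]
  · refine not_componentwiseLinear_of_outStar D hab hbc hac ?_ ?_ ?_ ?_ ?_ hwa hwc hcl <;>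
      simp [mem_edges_iff_of_induced hE, hab, hbc, hac, hab.symm, hbc.symm, hac.symm]
  · refine not_componentwiseLinear_of_path D hab hbc hac ?_ ?_ ?_ ?_ (fun _ => hwa) hwb hwc hcl <;>
      simp [mem_edges_iff_of_induced hE, hab, hbc, hac, hab.symm, hbc.symm, hac.symm]
  · refine not_componentwiseLinear_of_path D hac hbc.symm hab ?_ ?_ ?_ ?_ ?_ hwc hwb hcl <;>
      simp [mem_edges_iff_of_induced hE, hab, hbc, hac, hab.symm, hbc.symm, hac.symm]
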